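/- Fix reals a, b with a² + b² > 0, set Ω = √(a² + b²), and define the 3×3 real matrix function R(t) with entries: R_{11} = (a² cos(Ωt) + b²)/Ω², R_{12} = −a sin(Ωt)/Ω, R_{13} = 2 a b sin²(Ωt/2)/Ω², R_{21} = a sin(Ωt)/Ω, R_{22} = cos(Ωt), R_{23} = −b sin(Ωt)/Ω, R_{31} = 2 a b sin²(Ωt/2)/Ω², R_{32} = b sin(Ωt)/Ω, R_{33} = (a² + b² cos(Ωt))/Ω². Then R(0) = I and R solves the linear ODE dR/dt = G·R with G = [[0, −a, 0], [a, 0, −b], [0, b, 0]]. -/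

import Mathlib

/-!
`R(t)` is Rodrigues' formula `1 + (sin Ωt / Ω) G + ((1 - cos Ωt) / Ω²) G²` for `exp (t G)`,
written out entrywise. The skew-symmetric `G` satisfies `G³ = -Ω² G` (Cayley–Hamilton), so
`G R(t) = cos Ωt · G + (sin Ωt / Ω) G²`, which is the derivative of the formula.
-/

open Matrix

attribute [local instance] Matrix.normedAddCommGroup Matrix.normedSpace

/-- The rotation-matrix solution of the two-magnet Bloch equations
(Appendix F.1), with `Ω = √(a² + b²)`. -/
noncomputable def Rsol (a b : ℝ) (t : ℝ) : Matrix (Fin 3) (Fin 3) ℝ :=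
  !![(a ^ 2 * Real.cos (Real.sqrt (a ^ 2 + b ^ 2) * t) + b ^ 2) /
        Real.sqrt (a ^ 2 + b ^ 2) ^ 2,
      -(a * Real.sin (Real.sqrt (a ^ 2 + b ^ 2) * t)) / Real.sqrt (a ^ 2 + b ^ 2),
      2 * a * b * Real.sin (Real.sqrt (a ^ 2 + b ^ 2) * t / 2) ^ 2 /
        Real.sqrt (a ^ 2 + b ^ 2) ^ 2;
    a * Real.sin (Real.sqrt (a ^ 2 + b ^ 2) * t) / Real.sqrt (a ^ 2 + b ^ 2),
      Real.cos (Real.sqrt (a ^ 2 + b ^ 2) * t),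
      -(b * Real.sin (Real.sqrt (a ^ 2 + b ^ 2) * t)) / Real.sqrt (a ^ 2 + b ^ 2);
    2 * a * b * Real.sin (Real.sqrt (a ^ 2 + b ^ 2) * t / 2) ^ 2 /
        Real.sqrt (a ^ 2 + b ^ 2) ^ 2,
      b * Real.sin (Real.sqrt (a ^ 2 + b ^ 2) * t) / Real.sqrt (a ^ 2 + b ^ 2),
      (a ^ 2 + b ^ 2 * Real.cos (Real.sqrt (a ^ 2 + b ^ 2) * t)) /
        Real.sqrt (a ^ 2 + b ^ 2) ^ 2]

/-- The generator `G` of the Bloch equations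
`ẋ = -a y, ẏ = a x - b z, ż = b y`. -/
noncomputable def Gmat (a b : ℝ) : Matrix (Fin 3) (Fin 3) ℝ :=
  !![0, -a, 0; a, 0, -b; 0, b, 0]

noncomputable def rodrigues {n : Type*} [Fintype n] [DecidableEq n]
    (G : Matrix n n ℝ) (Ω t : ℝ) : Matrix n n ℝ :=
  1 + (Real.sin (Ω * t) / Ω) • G + ((1 - Real.cos (Ω * t)) / Ω ^ 2) • G ^ 2

section Rodrigues

variable {n : Type*} [Fintype n] [DecidableEq n] {G : Matrix n n ℝ} {Ω : ℝ}

lemma rodrigues_zero (G : Matrix n n ℝ) (Ω : ℝ) : rodrigues G Ω 0 = 1 := by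
  simp [rodrigues]

lemma hasDerivAt_sin_mul_div (hΩ : Ω ≠ 0) (t : ℝ) :
    HasDerivAt (fun s => Real.sin (Ω * s) / Ω) (Real.cos (Ω * t)) t := by
  have h := (((hasDerivAt_id t).const_mul Ω).sin).div_const Ω
  simp only [id, mul_one] at h
  rwa [mul_div_cancel_right₀ _ hΩ] at h

lemma hasDerivAt_one_sub_cos_mul_div (hΩ : Ω ≠ 0) (t : ℝ) :
    HasDerivAt (fun s => (1 - Real.cos (Ω * s)) / Ω ^ 2) (Real.sin (Ω * t) / Ω) t := by
  have h := ((((hasDerivAt_id t).const_mul Ω).cos).const_sub 1).div_const (Ω ^ 2)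
  simp only [id, mul_one] at h
  refine h.congr_deriv ?_
  field_simp

/-- The `G³` term of `G * rodrigues G Ω t` folds back into the `G` term. -/
lemma hasDerivAt_rodrigues (hG : G ^ 3 = -Ω ^ 2 • G) (hΩ : Ω ≠ 0) (t : ℝ) :
    HasDerivAt (rodrigues G Ω) (G * rodrigues G Ω t) t := by
  have h := ((((hasDerivAt_sin_mul_div hΩ t).smul_const G).const_add 1).add
    ((hasDerivAt_one_sub_cos_mul_div hΩ t).smul_const (G ^ 2)))
  refine h.congr_deriv ?_
  have hG' : G * G ^ 2 = -Ω ^ 2 • G := by rw [← pow_succ', hG]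
  simp only [rodrigues, mul_add, mul_one, Matrix.mul_smul, ← sq, hG', smul_smul]
  have hcoeff : (1 - Real.cos (Ω * t)) / Ω ^ 2 * -Ω ^ 2 = Real.cos (Ω * t) - 1 := by
    field_simp
    ring
  rw [hcoeff, sub_smul, one_smul]
  abel

end Rodrigues

lemma Gmat_sq (a b : ℝ) :
    Gmat a b ^ 2 = !![-a ^ 2, 0, a * b; 0, -(a ^ 2 + b ^ 2), 0; a * b, 0, -b ^ 2] := by
  ext i j
  fin_cases i <;> fin_cases j <;> simp [sq, Gmat, Matrix.mul_apply, Fin.sum_univ_three] <;> ring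

lemma Gmat_pow_three (a b : ℝ) : Gmat a b ^ 3 = -(a ^ 2 + b ^ 2) • Gmat a b := by
  rw [pow_succ', Gmat_sq]
  ext i j
  fin_cases i <;> fin_cases j <;> simp [Gmat, Matrix.mul_apply, Fin.sum_univ_three] <;> ring

lemma Rsol_eq_rodrigues {a b : ℝ} (hab : a ^ 2 + b ^ 2 ≠ 0) :
    Rsol a b = rodrigues (Gmat a b) (Real.sqrt (a ^ 2 + b ^ 2)) := by
  have hΩ : Real.sqrt (a ^ 2 + b ^ 2) ^ 2 = a ^ 2 + b ^ 2 := Real.sq_sqrt (by positivity)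
  have hhalf (x : ℝ) : Real.sin (x / 2) ^ 2 = (1 - Real.cos x) / 2 := by
    rw [Real.sin_sq_eq_half_sub, mul_div_cancel₀ x two_ne_zero]; ring
  funext t
  rw [rodrigues, Gmat_sq]
  ext i j
  fin_cases i <;> fin_cases j <;> simp [Rsol, Gmat, hhalf, hΩ] <;> field_simp <;> ring

/-- Appendix F.1 of the paper: the explicit rotation family `R(t)` satisfies
`R(0) = 1` and solves `dR/dt = G · R`. -/
theorem stmt_17 (a b : ℝ) (hab : 0 < a ^ 2 + b ^ 2) :
    Rsol a b 0 = 1 ∧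
    ∀ t : ℝ, HasDerivAt (Rsol a b) (Gmat a b * Rsol a b t) t := by
  have hΩ : Real.sqrt (a ^ 2 + b ^ 2) ^ 2 = a ^ 2 + b ^ 2 := Real.sq_sqrt hab.le
  have hG : Gmat a b ^ 3 = -Real.sqrt (a ^ 2 + b ^ 2) ^ 2 • Gmat a b := by
    rw [hΩ, Gmat_pow_three]
  rw [Rsol_eq_rodrigues hab.ne']
  exact ⟨rodrigues_zero _ _, hasDerivAt_rodrigues hG (by positivity)⟩
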